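/- arXiv:1805.07798 — 4 statements merged into one kernel-verified Lean document; each statement's English description precedes it below -/
import Mathlib

section
/- Let P_j ∈ R^{r×d} for j = 1,...,k be patch selection matrices with stride s ≥ ⌊r/2⌋ + 1, i.e., P_j x extracts coordinates (j-1)s+1 through (j-1)s+r of x. Then, whenever a is a unit vector, the matrix P^a := Σ_{1≤i,j≤k} a_i a_j P_i P_jᵀ has entries P^a(p,q) = Σ_j a_j² if p = q, P^a(p,q) = Σ_{j=1}^{k-1} a_j a_{j+1} if |p - q| = s, and P^a(p,q) = 0 otherwise. -/
open Finset Matrix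

/-- No coincidence except diagonal and adjacent offsets. -/
lemma patch_no_match {s p q r : ℕ} (hs : 0 < s) (hr : r < 2 * s)
    (hp : p < r) (hq : q < r) (h1 : q ≠ p + s) (h2 : p ≠ q + s) (h3 : p ≠ q)
    (i j : ℕ) : i * s + p ≠ j * s + q := by
  intro h
  rcases lt_trichotomy i j with hij | rfl | hij
  · obtain ⟨m, hm, rfl⟩ : ∃ m, 1 ≤ m ∧ j = i + m := ⟨j - i, by omega, by omega⟩
    have hms : m * s + q = p := by
      have : (i + m) * s = i * s + m * s := by ring
      omega
    have hm2 : m < 2 := by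
      have : m * s < 2 * s := by omega
      exact lt_of_mul_lt_mul_right this (Nat.zero_le s)
    interval_cases m <;> omega
  · omega
  · obtain ⟨m, hm, rfl⟩ : ∃ m, 1 ≤ m ∧ i = j + m := ⟨i - j, by omega, by omega⟩
    have hms : m * s + p = q := by
      have : (j + m) * s = j * s + m * s := by ring
      omega
    have hm2 : m < 2 := by
      have : m * s < 2 * s := by omega
      exact lt_of_mul_lt_mul_right this (Nat.zero_le s)
    interval_cases m <;> omega

/-- Structure of the weighted patch matrix `Pᵃ = Σ_{i,j} a_i a_j P_i P_jᵀ` for patch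
selection matrices with filter size `r` and stride `s ≥ ⌊r/2⌋ + 1` (so only adjacent
patches overlap), when `a` is a unit vector: `Pᵃ(p,q) = Σ_j a_j²` on the diagonal,
`Σ_j a_j a_{j+1}` when `|p - q| = s`, and `0` otherwise. -/
theorem patch_matrix_structure
    {r s d k : ℕ} (hs : r / 2 + 1 ≤ s) (hd : k * s + r ≤ d)
    (a : Fin (k + 1) → ℝ) (ha : ∑ j, (a j) ^ 2 = 1)
    (P : Fin (k + 1) → Matrix (Fin r) (Fin d) ℝ)
    (hP : ∀ (j : Fin (k + 1)) (p : Fin r) (q : Fin d),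
      P j p q = if (q : ℕ) = (j : ℕ) * s + (p : ℕ) then 1 else 0) :
    ∀ p q : Fin r,
      (∑ i, ∑ j, (a i * a j) • (P i * (P j)ᵀ)) p q =
        if p = q then ∑ j, (a j) ^ 2
        else if ((p : ℤ) - (q : ℤ)).natAbs = s then ∑ j : Fin k, a j.castSucc * a j.succ
        else 0 := by
  intro p q
  have hs0 : 0 < s := by omega
  have hr2s : r < 2 * s := by omega
  set A : ℕ → ℝ := fun n => if h : n < k + 1 then a ⟨n, h⟩ else 0 with hA
  have hAa : ∀ i : Fin (k + 1), a i = A i := by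
    intro i; simp [hA, i.isLt]
    exact fun h => absurd i.isLt (by omega)
  -- entrywise formula for each term
  have key : ∀ i j : Fin (k + 1),
      ((a i * a j) • (P i * (P j)ᵀ)) p q
        = A i * A j * (if (i : ℕ) * s + (p : ℕ) = (j : ℕ) * s + (q : ℕ) then 1 else 0) := by
    intro i j
    have hlt : (i : ℕ) * s + (p : ℕ) < d := by
      have hi : (i : ℕ) ≤ k := Nat.lt_succ_iff.mp i.isLt
      have : (i : ℕ) * s ≤ k * s := Nat.mul_le_mul_right s hi
      have := p.isLt
      omega
    simp only [Matrix.smul_apply, smul_eq_mul, mul_apply, transpose_apply, hP]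
    rw [← hAa i, ← hAa j]
    congr 1
    rw [Finset.sum_eq_single (⟨(i : ℕ) * s + (p : ℕ), hlt⟩ : Fin d)]
    · by_cases h : (i : ℕ) * s + (p : ℕ) = (j : ℕ) * s + (q : ℕ) <;> simp [h]
    · intro b _ hb
      have : (b : ℕ) ≠ (i : ℕ) * s + (p : ℕ) := by
        intro hc; exact hb (Fin.ext hc)
      simp [this]
    · intro h; exact absurd (Finset.mem_univ _) h
  have swap_sum : ∀ f : ℕ → ℕ → ℝ,
      (∑ i : Fin (k + 1), ∑ j : Fin (k + 1), f i j)
        = ∑ i ∈ Finset.range (k + 1), ∑ j ∈ Finset.range (k + 1), f i j := by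
    intro f
    rw [Fin.sum_univ_eq_sum_range (fun i => ∑ j : Fin (k + 1), f i j)]
    exact Finset.sum_congr rfl fun i _ => Fin.sum_univ_eq_sum_range _ _
  have lhs_eq : (∑ i, ∑ j, (a i * a j) • (P i * (P j)ᵀ)) p q
      = ∑ i ∈ Finset.range (k + 1), ∑ j ∈ Finset.range (k + 1),
          A i * A j * (if i * s + (p : ℕ) = j * s + (q : ℕ) then 1 else 0) := by
    simp only [Matrix.sum_apply]
    rw [show (∑ i : Fin (k+1), ∑ j : Fin (k+1), ((a i * a j) • (P i * (P j)ᵀ)) p q)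
        = ∑ i : Fin (k+1), ∑ j : Fin (k+1),
            A i * A j * (if (i : ℕ) * s + (p : ℕ) = (j : ℕ) * s + (q : ℕ) then 1 else 0)
      from Finset.sum_congr rfl fun i _ => Finset.sum_congr rfl fun j _ => key i j]
    exact swap_sum (fun i j => A i * A j * (if i * s + (p : ℕ) = j * s + (q : ℕ) then 1 else 0))
  rw [lhs_eq]
  by_cases hpq : p = q
  · subst hpq
    rw [if_pos rfl]
    have : ∀ i ∈ Finset.range (k + 1), ∀ j ∈ Finset.range (k + 1),
        A i * A j * (if i * s + (p : ℕ) = j * s + (p : ℕ) then (1:ℝ) else 0)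
          = if j = i then A i * A j else 0 := by
      intro i _ j _
      by_cases h : i = j
      · subst h; simp
      · have : i * s + (p : ℕ) ≠ j * s + (p : ℕ) := by
          intro hc
          exact h (Nat.eq_of_mul_eq_mul_right hs0 (by omega))
        rw [if_neg this, if_neg (fun hc => h hc.symm), mul_zero]
    rw [Finset.sum_congr rfl fun i hi => Finset.sum_congr rfl (this i hi)]
    have hrhs : (∑ j : Fin (k + 1), a j ^ 2) = ∑ j ∈ Finset.range (k + 1), A j ^ 2 := by
      rw [show (∑ j : Fin (k + 1), a j ^ 2) = ∑ j : Fin (k + 1), A (j : ℕ) ^ 2 from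
        Finset.sum_congr rfl fun j _ => by rw [hAa]]
      exact Fin.sum_univ_eq_sum_range (fun j => A j ^ 2) (k + 1)
    rw [hrhs]
    refine Finset.sum_congr rfl fun i hi => ?_
    rw [Finset.sum_ite_eq' _ i (fun j => A i * A j), if_pos hi, ← sq]
  · rw [if_neg hpq]
    have hpq' : (p : ℕ) ≠ (q : ℕ) := fun h => hpq (Fin.ext h)
    have rhs_eq : (∑ j : Fin k, a j.castSucc * a j.succ)
        = ∑ j ∈ Finset.range k, A j * A (j + 1) := by
      rw [show (∑ j : Fin k, a j.castSucc * a j.succ)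
          = ∑ j : Fin k, A (j : ℕ) * A ((j : ℕ) + 1) from
        Finset.sum_congr rfl fun j _ => by
          rw [hAa, hAa]; rfl]
      exact Fin.sum_univ_eq_sum_range (fun j => A j * A (j + 1)) k
    by_cases h1 : (q : ℕ) = (p : ℕ) + s
    · -- q = p + s : matches when i = j + 1
      rw [if_pos (by omega), rhs_eq]
      have step : ∀ i ∈ Finset.range (k + 1), ∀ j ∈ Finset.range (k + 1),
          A i * A j * (if i * s + (p : ℕ) = j * s + (q : ℕ) then (1:ℝ) else 0)
            = if i = j + 1 then A i * A j else 0 := by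
        intro i _ j _
        by_cases h : i = j + 1
        · subst h
          rw [if_pos (by rw [h1]; ring), if_pos rfl, mul_one]
        · have : i * s + (p : ℕ) ≠ j * s + (q : ℕ) := by
            intro hc
            rw [h1] at hc
            have : i * s = (j + 1) * s := by
              have : (j + 1) * s = j * s + s := by ring
              omega
            exact h (Nat.eq_of_mul_eq_mul_right hs0 this)
          rw [if_neg this, if_neg h, mul_zero]
      rw [Finset.sum_congr rfl fun i hi => Finset.sum_congr rfl (step i hi)]
      rw [Finset.sum_comm]
      have inner : ∀ j ∈ Finset.range (k + 1),
          (∑ i ∈ Finset.range (k + 1), if i = j + 1 then A i * A j else 0)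
            = if j < k then A (j + 1) * A j else 0 := by
        intro j _
        rw [Finset.sum_ite_eq' (Finset.range (k + 1)) (j + 1) (fun i => A i * A j)]
        simp [Nat.lt_succ_iff, Nat.succ_le_iff]
      rw [Finset.sum_congr rfl inner, Finset.sum_range_succ, if_neg (lt_irrefl k), add_zero]
      exact Finset.sum_congr rfl fun j hj => by
        rw [if_pos (Finset.mem_range.mp hj), mul_comm]
    · by_cases h2 : (p : ℕ) = (q : ℕ) + s
      · -- p = q + s : matches when j = i + 1
        rw [if_pos (by omega), rhs_eq]
        have step : ∀ i ∈ Finset.range (k + 1), ∀ j ∈ Finset.range (k + 1),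
            A i * A j * (if i * s + (p : ℕ) = j * s + (q : ℕ) then (1:ℝ) else 0)
              = if j = i + 1 then A i * A j else 0 := by
          intro i _ j _
          by_cases h : j = i + 1
          · subst h
            rw [if_pos (by rw [h2]; ring), if_pos rfl, mul_one]
          · have : i * s + (p : ℕ) ≠ j * s + (q : ℕ) := by
              intro hc
              rw [h2] at hc
              have : j * s = (i + 1) * s := by
                have : (i + 1) * s = i * s + s := by ring
                omega
              exact h (Nat.eq_of_mul_eq_mul_right hs0 this)
            rw [if_neg this, if_neg h, mul_zero]
        rw [Finset.sum_congr rfl fun i hi => Finset.sum_congr rfl (step i hi)]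
        have inner : ∀ i ∈ Finset.range (k + 1),
            (∑ j ∈ Finset.range (k + 1), if j = i + 1 then A i * A j else 0)
              = if i < k then A i * A (i + 1) else 0 := by
          intro i _
          rw [Finset.sum_ite_eq' (Finset.range (k + 1)) (i + 1) (fun j => A i * A j)]
          simp [Nat.lt_succ_iff, Nat.succ_le_iff]
        rw [Finset.sum_congr rfl inner, Finset.sum_range_succ, if_neg (lt_irrefl k), add_zero]
        exact Finset.sum_congr rfl fun i hi => by
          rw [if_pos (Finset.mem_range.mp hi)]
      · rw [if_neg (by omega)]
        refine Finset.sum_eq_zero fun i _ => Finset.sum_eq_zero fun j _ => ?_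
        rw [if_neg (patch_no_match hs0 hr2s p.isLt q.isLt h1 h2 hpq' i j), mul_zero]
end

section
/- Under the large stride assumption s ≥ ⌊r/2⌋+1 and ‖a‖₂ = 1, the minimum eigenvalue of P^a = Σ_{i,j} a_i a_j P_i P_jᵀ satisfies λ_min(P^a) ≥ 1 - cos(π/(k+1)), and the maximum eigenvalue satisfies λ_max(P^a) ≤ 2. -/
/-!
For a test vector `x`, the quadratic form of `Pᵃ` equals `‖a‖² ‖x‖² + 2 c G` with
`c = Σ a_i a_{i+1}` and `G = Σ_p x_p x_{p+s}`: since `2 s > r`, only equal or adjacent patches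
overlap, and adjacent ones overlap along a shift by `s`. Every product `x_p x_{p+s}` has
`p < s ≤ p + s < 2 s`, so AM–GM gives `|2 G| ≤ ‖x‖²`. And `|c| ≤ cos (π / (k + 2)) ‖a‖²`, half the
top adjacency eigenvalue of the path on `k + 1` vertices: summing the weighted AM–GM inequalities
`2 a_i a_{i+1} ≤ (w_{i+2} / w_{i+1}) a_i² + (w_{i+1} / w_{i+2}) a_{i+1}²` for the positive
eigenvector `w_n = sin (n π / (k + 2))` telescopes to exactly this bound. Evaluating the form on
unit eigenvectors gives the eigenvalue bounds.
-/

open Finset Matrix Real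

lemma two_mul_mul_le_mul_sq_add_inv_mul_sq {t : ℝ} (ht : 0 < t) (x y : ℝ) :
    2 * (x * y) ≤ t * x ^ 2 + t⁻¹ * y ^ 2 := by
  have hsq : 0 ≤ t⁻¹ * (t * x - y) ^ 2 := by positivity
  have hinv : t * t⁻¹ = 1 := mul_inv_cancel₀ ht.ne'
  linear_combination hsq + (x ^ 2 * t - 2 * x * y) * hinv

lemma sum_two_mul_mul_succ_le_of_recurrence {k : ℕ} {w : ℕ → ℝ} {μ : ℝ}
    (hw : ∀ n, 1 ≤ n → n ≤ k + 1 → 0 < w n) (hw₀ : w 0 = 0) (hwk : w (k + 2) = 0)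
    (hrec : ∀ n ≤ k, w (n + 2) + w n = μ * w (n + 1)) (a : ℕ → ℝ) :
    ∑ i ∈ range k, 2 * (a i * a (i + 1)) ≤ μ * ∑ i ∈ range (k + 1), a i ^ 2 := by
  set T : ℕ → ℝ := fun i => w (i + 2) / w (i + 1) * a i ^ 2
  set W : ℕ → ℝ := fun i => w i / w (i + 1) * a i ^ 2
  have hstep : ∀ i ∈ range k, 2 * (a i * a (i + 1)) ≤ T i + W (i + 1) := by
    intro i hi
    have hi := mem_range.mp hi
    have h := two_mul_mul_le_mul_sq_add_inv_mul_sq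
      (div_pos (hw (i + 2) (by omega) (by omega)) (hw (i + 1) (by omega) (by omega)))
      (a i) (a (i + 1))
    rwa [inv_div] at h
  have hTW : ∀ i ∈ range (k + 1), T i + W i = μ * a i ^ 2 := by
    intro i hi
    have hi := mem_range.mp hi
    have hw₁ := (hw (i + 1) (by omega) (by omega)).ne'
    simp only [T, W]
    field_simp
    rw [hrec i (by omega)]
    ring
  calc ∑ i ∈ range k, 2 * (a i * a (i + 1))
      ≤ ∑ i ∈ range k, (T i + W (i + 1)) := sum_le_sum hstep
    _ = ∑ i ∈ range (k + 1), (T i + W i) := by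
        simp only [sum_add_distrib, sum_range_succ T, sum_range_succ' W]
        simp [T, W, hw₀, hwk]
    _ = μ * ∑ i ∈ range (k + 1), a i ^ 2 := by rw [sum_congr rfl hTW, mul_sum]

lemma sin_nat_mul_pi_div_pos {n k : ℕ} (h₁ : 1 ≤ n) (h₂ : n ≤ k + 1) :
    0 < sin (n * (π / (k + 2))) := by
  have hk : (0 : ℝ) < k + 2 := by positivity
  apply sin_pos_of_pos_of_lt_pi
  · have : (1 : ℝ) ≤ n := by exact_mod_cast h₁
    positivity
  · have : (n : ℝ) < k + 2 := by norm_cast; omega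
    rw [mul_div_assoc', div_lt_iff₀ hk]
    nlinarith [pi_pos]

lemma sin_add_two_mul_add_sin (θ x : ℝ) :
    sin (x + 2 * θ) + sin x = 2 * cos θ * sin (x + θ) := by
  have e₁ : x + 2 * θ = (x + θ) + θ := by ring
  have e₂ : x = (x + θ) - θ := by ring
  rw [e₁, sin_add, e₂, sin_sub, sub_add_cancel]
  ring

lemma abs_sum_range_mul_succ_le (k : ℕ) (a : ℕ → ℝ) :
    |∑ i ∈ range k, a i * a (i + 1)| ≤ cos (π / (k + 2)) * ∑ i ∈ range (k + 1), a i ^ 2 := by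
  set θ := π / (k + 2)
  have hchain := sum_two_mul_mul_succ_le_of_recurrence (w := fun n => sin (n * θ))
    (μ := 2 * cos θ) (fun n h₁ h₂ => sin_nat_mul_pi_div_pos h₁ h₂) (by simp)
    (by rw [Nat.cast_add, Nat.cast_two, mul_div_cancel₀ _ (by positivity), sin_pi])
    (fun n _ => by convert sin_add_two_mul_add_sin θ (n * θ) using 3 <;> push_cast <;> ring)
    (fun i => |a i|)
  simp only [sq_abs, ← abs_mul, ← mul_sum, mul_assoc] at hchain
  calc |∑ i ∈ range k, a i * a (i + 1)| ≤ ∑ i ∈ range k, |a i * a (i + 1)| :=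
        abs_sum_le_sum_abs _ _
    _ ≤ cos θ * ∑ i ∈ range (k + 1), a i ^ 2 := by linarith

lemma abs_two_mul_sum_range_mul_add_le (y : ℕ → ℝ) (s : ℕ) :
    |2 * ∑ q ∈ range s, y q * y (q + s)| ≤ ∑ q ∈ range (s + s), y q ^ 2 := by
  rw [sum_range_add, ← sum_add_distrib, mul_sum]
  refine (abs_sum_le_sum_abs _ _).trans (sum_le_sum fun q _ => ?_)
  rw [abs_mul, abs_mul, abs_two, add_comm s q, ← sq_abs (y q), ← sq_abs (y (q + s))]
  nlinarith [two_mul_le_add_sq |y q| |y (q + s)|]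

def autocorrelation {n : ℕ} (x : Fin n → ℝ) (t : ℕ) : ℝ :=
  ∑ i : Fin n, ∑ j : Fin n, if (j : ℕ) = i + t then x i * x j else 0

section Autocorrelation

variable {n : ℕ} (x : Fin n → ℝ)

lemma extend_val_apply_of_le {i : ℕ} (h : n ≤ i) : Function.extend Fin.val x 0 i = 0 :=
  Function.extend_apply' _ _ _ (by rintro ⟨j, rfl⟩; omega)

lemma sum_sq_eq_sum_range_extend {N : ℕ} (h : n ≤ N) :
    ∑ i, x i ^ 2 = ∑ i ∈ range N, Function.extend Fin.val x 0 i ^ 2 := by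
  simp only [← Fin.val_injective.extend_apply x 0]
  rw [Fin.sum_univ_eq_sum_range (fun i => Function.extend Fin.val x 0 i ^ 2),
    eventually_constant_sum (fun i hi => by rw [extend_val_apply_of_le x hi]; simp) h]

lemma autocorrelation_eq_sum_range {t N : ℕ} (h : n ≤ N + t) :
    autocorrelation x t =
      ∑ i ∈ range N, Function.extend Fin.val x 0 i * Function.extend Fin.val x 0 (i + t) := by
  set y := Function.extend Fin.val x 0
  have hy : ∀ i, n ≤ i → y i = 0 := fun i hi => extend_val_apply_of_le x hi
  have hinner : ∀ i : ℕ, ∑ j ∈ range n, (if j = i + t then y i * y j else 0) = y i * y (i + t) := by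
    intro i
    rw [sum_ite_eq']
    split_ifs with hi
    · rfl
    · rw [hy (i + t) (by simpa using hi), mul_zero]
  calc autocorrelation x t = ∑ i ∈ range n, y i * y (i + t) := by
        simp only [autocorrelation, ← Fin.val_injective.extend_apply x 0]
        rw [← Fin.sum_univ_eq_sum_range (fun i => y i * y (i + t))]
        refine sum_congr rfl fun i _ => ?_
        rw [← hinner, Fin.sum_univ_eq_sum_range (fun j => if j = i + t then y i * y j else 0)]
    _ = ∑ i ∈ range (n + N), y i * y (i + t) :=
        (eventually_constant_sum (fun i hi => by rw [hy i hi, zero_mul]) (by omega)).symm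
    _ = ∑ i ∈ range N, y i * y (i + t) :=
        eventually_constant_sum (fun i hi => by rw [hy (i + t) (by omega), mul_zero]) (by omega)

lemma autocorrelation_zero : autocorrelation x 0 = x ⬝ᵥ x := by
  simp [autocorrelation, dotProduct, Fin.val_inj]

lemma autocorrelation_eq_zero_of_le {t : ℕ} (h : n ≤ t) : autocorrelation x t = 0 :=
  sum_eq_zero fun i _ => sum_eq_zero fun j _ => if_neg (by omega)

lemma abs_two_mul_autocorrelation_le {s : ℕ} (h : n ≤ s + s) :
    |2 * autocorrelation x s| ≤ x ⬝ᵥ x := by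
  simp only [dotProduct, ← sq]
  rw [autocorrelation_eq_sum_range x h, sum_sq_eq_sum_range_extend x h]
  exact abs_two_mul_sum_range_mul_add_le _ s

lemma sum_sum_ite_add_eq_autocorrelation {m m' t : ℕ} (h : m + t = m') :
    ∑ p : Fin n, ∑ q : Fin n, (if m' + p = m + q then x p * x q else 0) =
      autocorrelation x t := by
  refine sum_congr rfl fun p _ => sum_congr rfl fun q _ => if_congr ?_ rfl rfl
  omega

lemma sum_sum_ite_add_eq_autocorrelation' {m m' t : ℕ} (h : m + t = m') :
    ∑ p : Fin n, ∑ q : Fin n, (if m + p = m' + q then x p * x q else 0) =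
      autocorrelation x t := by
  rw [sum_comm, ← sum_sum_ite_add_eq_autocorrelation x h]
  exact sum_congr rfl fun p _ => sum_congr rfl fun q _ => if_congr eq_comm (mul_comm _ _) rfl

end Autocorrelation

lemma abs_autocorrelation_one_le {k : ℕ} (a : Fin (k + 1) → ℝ) :
    |autocorrelation a 1| ≤ cos (π / (k + 2)) * ∑ i, a i ^ 2 := by
  rw [autocorrelation_eq_sum_range a (N := k) le_rfl, sum_sq_eq_sum_range_extend a le_rfl]
  exact abs_sum_range_mul_succ_le k _

lemma sum_sum_ite_patch_overlap {r s : ℕ} (x : Fin r → ℝ) (hr : r ≤ s + s) (I J : ℕ) :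
    ∑ p : Fin r, ∑ q : Fin r, (if I * s + p = J * s + q then x p * x q else 0) =
      (if I = J then autocorrelation x 0 else 0) + (if J = I + 1 then autocorrelation x s else 0) +
        (if I = J + 1 then autocorrelation x s else 0) := by
  have hfar : ∀ {m n : ℕ}, m + 2 ≤ n → r ≤ (n - m) * s := fun h =>
    hr.trans (by rw [← two_mul]; exact Nat.mul_le_mul_right _ (by omega))
  obtain rfl | rfl | rfl | h | h : I = J ∨ J = I + 1 ∨ I = J + 1 ∨ J + 2 ≤ I ∨ I + 2 ≤ J := by
    omega
  · rw [sum_sum_ite_add_eq_autocorrelation x (add_zero _)]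
    split_ifs <;> first | omega | ring
  · rw [sum_sum_ite_add_eq_autocorrelation' x (add_one_mul I s).symm]
    split_ifs <;> first | omega | ring
  · rw [sum_sum_ite_add_eq_autocorrelation x (add_one_mul J s).symm]
    split_ifs <;> first | omega | ring
  · rw [sum_sum_ite_add_eq_autocorrelation x (t := (I - J) * s)
      (by rw [← add_mul]; congr 1; omega), autocorrelation_eq_zero_of_le x (hfar h)]
    split_ifs <;> first | omega | ring
  · rw [sum_sum_ite_add_eq_autocorrelation' x (t := (J - I) * s)
      (by rw [← add_mul]; congr 1; omega), autocorrelation_eq_zero_of_le x (hfar h)]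
    split_ifs <;> first | omega | ring

lemma sum_sum_mul_tridiagonal {n : ℕ} (a : Fin n → ℝ) (X G : ℝ) :
    ∑ i : Fin n, ∑ j : Fin n, a i * a j *
        ((if (i : ℕ) = j then X else 0) + (if (j : ℕ) = i + 1 then G else 0) +
          (if (i : ℕ) = j + 1 then G else 0)) =
      (∑ i, a i ^ 2) * X + 2 * autocorrelation a 1 * G := by
  have hdiag : ∑ i : Fin n, ∑ j : Fin n, a i * a j * (if (i : ℕ) = j then X else 0) =
      (∑ i, a i ^ 2) * X := by
    simp only [Fin.val_inj, mul_ite, mul_zero, sum_ite_eq, mem_univ, if_true, sum_mul, sq]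
  have hsuper : ∑ i : Fin n, ∑ j : Fin n, a i * a j * (if (j : ℕ) = i + 1 then G else 0) =
      autocorrelation a 1 * G := by
    simp only [autocorrelation, sum_mul, ite_mul, zero_mul, mul_ite, mul_zero]
  have hsub : ∑ i : Fin n, ∑ j : Fin n, a i * a j * (if (i : ℕ) = j + 1 then G else 0) =
      autocorrelation a 1 * G := by
    rw [sum_comm, ← hsuper]
    exact sum_congr rfl fun i _ => sum_congr rfl fun j _ => by ring
  simp only [mul_add, sum_add_distrib, hdiag, hsuper, hsub]
  ring

section Patch

variable {ι : Type*} {r d : ℕ} {P : ι → Matrix (Fin r) (Fin d) ℝ} {o : ι → ℕ}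

lemma mul_transpose_apply_of_patch (hP : ∀ j p q, P j p q = if (q : ℕ) = o j + p then 1 else 0)
    (ho : ∀ j, o j + r ≤ d) (i j : ι) (p q : Fin r) :
    (P i * (P j)ᵀ) p q = if o i + p = o j + q then 1 else 0 := by
  have hlt : o i + p < d := by have := ho i; omega
  rw [mul_apply, sum_eq_single ⟨o i + p, hlt⟩]
  · simp [hP]
  · intro m _ hm
    rw [hP, if_neg fun h => hm (Fin.ext h), zero_mul]
  · simp

lemma dotProduct_mul_transpose_mulVec_of_patch
    (hP : ∀ j p q, P j p q = if (q : ℕ) = o j + p then 1 else 0) (ho : ∀ j, o j + r ≤ d)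
    (i j : ι) (x : Fin r → ℝ) :
    x ⬝ᵥ ((P i * (P j)ᵀ) *ᵥ x) =
      ∑ p : Fin r, ∑ q : Fin r, if o i + p = o j + q then x p * x q else 0 := by
  simp only [dotProduct, mulVec, mul_transpose_apply_of_patch hP ho, mul_sum, ite_mul, one_mul,
    zero_mul, mul_ite, mul_zero]

end Patch

lemma dotProduct_sum_sum_smul_mul_transpose_mulVec {r s d k : ℕ} (hr : r ≤ s + s)
    (hd : k * s + r ≤ d) (P : Fin (k + 1) → Matrix (Fin r) (Fin d) ℝ)
    (hP : ∀ (j : Fin (k + 1)) (p : Fin r) (q : Fin d),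
      P j p q = if (q : ℕ) = (j : ℕ) * s + (p : ℕ) then 1 else 0)
    (a : Fin (k + 1) → ℝ) (x : Fin r → ℝ) :
    x ⬝ᵥ ((∑ i, ∑ j, (a i * a j) • (P i * (P j)ᵀ)) *ᵥ x) =
      (∑ i, a i ^ 2) * (x ⬝ᵥ x) + 2 * autocorrelation a 1 * autocorrelation x s := by
  have ho : ∀ j : Fin (k + 1), (j : ℕ) * s + r ≤ d := fun j =>
    le_trans (by gcongr; omega) hd
  simp only [sum_mulVec, dotProduct_sum, smul_mulVec, dotProduct_smul, smul_eq_mul,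
    dotProduct_mul_transpose_mulVec_of_patch hP ho, sum_sum_ite_patch_overlap x hr]
  rw [sum_sum_mul_tridiagonal, autocorrelation_zero]

lemma Matrix.IsHermitian.eigenvalues_mem_Icc_of_forall {n : Type*} [Fintype n] [DecidableEq n]
    {A : Matrix n n ℝ} (hA : A.IsHermitian) {m M : ℝ}
    (h : ∀ x, x ⬝ᵥ (A *ᵥ x) ∈ Set.Icc (m * (x ⬝ᵥ x)) (M * (x ⬝ᵥ x))) (i : n) :
    hA.eigenvalues i ∈ Set.Icc m M := by
  have hv : ⇑(hA.eigenvectorBasis i) ⬝ᵥ ⇑(hA.eigenvectorBasis i) = 1 := by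
    have h₁ := real_inner_self_eq_norm_sq (hA.eigenvectorBasis i)
    rw [hA.eigenvectorBasis.orthonormal.1 i, one_pow,
      EuclideanSpace.inner_eq_star_dotProduct] at h₁
    simpa using h₁
  have := h (hA.eigenvectorBasis i)
  rwa [hA.mulVec_eigenvectorBasis, dotProduct_smul, smul_eq_mul, hv, mul_one, mul_one,
    mul_one] at this

/-- Eigenvalue bounds for the weighted patch matrix: under the large-stride assumption
`s ≥ ⌊r/2⌋ + 1` and for a unit vector `a`, every eigenvalue of
`Pᵃ = Σ_{i,j} a_i a_j P_i P_jᵀ` lies in `[1 - cos (π/(k+2)), 2]`. -/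
theorem patch_matrix_eigenvalue_bounds
    {r s d k : ℕ} (hs : r / 2 + 1 ≤ s) (hd : k * s + r ≤ d)
    (a : Fin (k + 1) → ℝ) (ha : ∑ j, (a j) ^ 2 = 1)
    (P : Fin (k + 1) → Matrix (Fin r) (Fin d) ℝ)
    (hP : ∀ (j : Fin (k + 1)) (p : Fin r) (q : Fin d),
      P j p q = if (q : ℕ) = (j : ℕ) * s + (p : ℕ) then 1 else 0)
    (hHerm : (∑ i, ∑ j, (a i * a j) • (P i * (P j)ᵀ)).IsHermitian) :
    ∀ i : Fin r,
      1 - Real.cos (π / (k + 2)) ≤ hHerm.eigenvalues i ∧ hHerm.eigenvalues i ≤ 2 := by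
  have hr : r ≤ s + s := by omega
  refine hHerm.eigenvalues_mem_Icc_of_forall fun x => ?_
  have hc : |autocorrelation a 1| ≤ cos (π / (k + 2)) := by
    simpa [ha] using abs_autocorrelation_one_le a
  have hG := abs_two_mul_autocorrelation_le x hr
  have hcG : |autocorrelation a 1 * (2 * autocorrelation x s)| ≤ cos (π / (k + 2)) * (x ⬝ᵥ x) := by
    rw [abs_mul]
    exact mul_le_mul hc hG (abs_nonneg _) ((abs_nonneg _).trans hc)
  have hcos : cos (π / (k + 2)) * (x ⬝ᵥ x) ≤ x ⬝ᵥ x :=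
    mul_le_of_le_one_left ((abs_nonneg _).trans hG) (cos_le_one _)
  rw [dotProduct_sum_sum_smul_mul_transpose_mulVec hr hd P hP a x, ha, one_mul]
  constructor <;> linarith [abs_le.mp hcG]
end

section
/- If ‖x‖₂² ≤ B almost surely under distribution Z, then E_{x~Z}[(f(w*, a*, x) - f(w, a, x))²] ≤ 2kB(‖a‖₂²‖w - w*‖₂² + ‖a - a*‖₂²‖w*‖₂²). -/
/-!
Write `s_j = σ(w*·P_j x)` and `t_j = σ(w·P_j x)`. The difference of the two networks splits as
`∑ a_j (s_j - t_j) - ∑ (a_j - a*_j) s_j`, and `(V - U)² ≤ 2V² + 2U²`. By Cauchy–Schwarz and the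
Lipschitz property of `σ` (with `σ 0 = 0`), each `(s_j - t_j)²` is at most `‖w - w*‖² B` and each
`s_j²` at most `‖w*‖² B`, since `P_j` does not increase the norm of `x`. Cauchy–Schwarz over the
`k` patches then bounds the square pointwise on `{‖x‖² ≤ B}`, and hence its expectation.
-/

open Finset Matrix MeasureTheory

/-- The paper's `f(w, a, x)`. -/
def patchNet {m n κ : Type*} [Fintype m] [Fintype n] [Fintype κ] (σ : ℝ → ℝ)
    (P : κ → Matrix m n ℝ) (w : m → ℝ) (a : κ → ℝ) (x : n → ℝ) : ℝ :=
  ∑ j, a j * σ (w ⬝ᵥ P j *ᵥ x)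

section Neuron

variable {ι : Type*} [Fintype ι] (σ : ℝ → ℝ) (hσ : ∀ t u : ℝ, |σ t - σ u| ≤ |t - u|)
include hσ

theorem sq_sub_comp_dotProduct_le (u v : ι → ℝ) {y : ι → ℝ} {B : ℝ}
    (hy : ∑ i, y i ^ 2 ≤ B) :
    (σ (u ⬝ᵥ y) - σ (v ⬝ᵥ y)) ^ 2 ≤ (∑ i, (u i - v i) ^ 2) * B :=
  calc (σ (u ⬝ᵥ y) - σ (v ⬝ᵥ y)) ^ 2
      ≤ ((u - v) ⬝ᵥ y) ^ 2 := by rw [sub_dotProduct]; exact sq_le_sq.mpr (hσ _ _)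
    _ ≤ (∑ i, (u i - v i) ^ 2) * ∑ i, y i ^ 2 := sum_mul_sq_le_sq_mul_sq _ _ _
    _ ≤ (∑ i, (u i - v i) ^ 2) * B := by gcongr

theorem sq_comp_dotProduct_le (hσ0 : σ 0 = 0) (u : ι → ℝ) {y : ι → ℝ} {B : ℝ}
    (hy : ∑ i, y i ^ 2 ≤ B) :
    σ (u ⬝ᵥ y) ^ 2 ≤ (∑ i, u i ^ 2) * B := by
  simpa [hσ0] using sq_sub_comp_dotProduct_le σ hσ u 0 hy

end Neuron

theorem sq_sum_mul_le_of_sq_le {κ : Type*} [Fintype κ] (c s : κ → ℝ) {M : ℝ}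
    (hs : ∀ j, s j ^ 2 ≤ M) :
    (∑ j, c j * s j) ^ 2 ≤ (∑ j, c j ^ 2) * (Fintype.card κ * M) :=
  calc (∑ j, c j * s j) ^ 2 ≤ (∑ j, c j ^ 2) * ∑ j, s j ^ 2 := sum_mul_sq_le_sq_mul_sq _ _ _
    _ ≤ (∑ j, c j ^ 2) * (Fintype.card κ * M) := by
      gcongr
      simpa using sum_le_sum fun j (_ : j ∈ univ) => hs j

theorem sq_patchNet_sub_le {m n κ : Type*} [Fintype m] [Fintype n] [Fintype κ]
    (σ : ℝ → ℝ) (hσ : ∀ t u : ℝ, |σ t - σ u| ≤ |t - u|) (hσ0 : σ 0 = 0)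
    (P : κ → Matrix m n ℝ) (hP : ∀ j x, ∑ p, (P j *ᵥ x) p ^ 2 ≤ ∑ q, x q ^ 2)
    (w wstar : m → ℝ) (a astar : κ → ℝ) {x : n → ℝ} {B : ℝ} (hx : ∑ q, x q ^ 2 ≤ B) :
    (patchNet σ P wstar astar x - patchNet σ P w a x) ^ 2
      ≤ 2 * Fintype.card κ * B * ((∑ j, a j ^ 2) * (∑ i, (w i - wstar i) ^ 2)
          + (∑ j, (a j - astar j) ^ 2) * (∑ i, wstar i ^ 2)) := by
  set s := fun j => σ (wstar ⬝ᵥ P j *ᵥ x)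
  set t := fun j => σ (w ⬝ᵥ P j *ᵥ x)
  have hPx : ∀ j, ∑ p, (P j *ᵥ x) p ^ 2 ≤ B := fun j => (hP j x).trans hx
  have hsplit : patchNet σ P wstar astar x - patchNet σ P w a x
      = ∑ j, a j * (s j - t j) - ∑ j, (a j - astar j) * s j := by
    simp only [patchNet, s, t, mul_sub, sub_mul, sum_sub_distrib]
    ring
  have hV := sq_sum_mul_le_of_sq_le a (fun j => s j - t j) fun j => by
    rw [sub_sq_comm]; exact sq_sub_comp_dotProduct_le σ hσ w wstar (hPx j)
  have hU := sq_sum_mul_le_of_sq_le (fun j => a j - astar j) s fun j =>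
    sq_comp_dotProduct_le σ hσ hσ0 wstar (hPx j)
  rw [hsplit]
  nlinarith [sq_nonneg (∑ j, a j * (s j - t j) + ∑ j, (a j - astar j) * s j)]

/-- Expected squared-loss bound (Lemma `loss`): if `‖x‖² ≤ B` almost surely under `Z`,
then `E[(f(w*,a*,x) - f(w,a,x))²] ≤ 2kB (‖a‖²‖w-w*‖² + ‖a-a*‖²‖w*‖²)`. -/
theorem expected_loss_bound
    {r d k : ℕ} (σ : ℝ → ℝ)
    (hσLip : ∀ t u : ℝ, |σ t - σ u| ≤ |t - u|) (hσ0 : σ 0 = 0)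
    (P : Fin k → Matrix (Fin r) (Fin d) ℝ)
    (hP : ∀ (j : Fin k) (x : Fin d → ℝ),
      ∑ p, ((P j).mulVec x p) ^ 2 ≤ ∑ q, (x q) ^ 2)
    (w wstar : Fin r → ℝ) (a astar : Fin k → ℝ)
    (Z : Measure (Fin d → ℝ)) [IsProbabilityMeasure Z] (B : ℝ)
    (hB : ∀ᵐ x ∂Z, ∑ q, (x q) ^ 2 ≤ B) :
    ∫ x, ((∑ j, astar j * σ (wstar ⬝ᵥ (P j).mulVec x))
        - ∑ j, a j * σ (w ⬝ᵥ (P j).mulVec x)) ^ 2 ∂Z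
      ≤ 2 * k * B * ((∑ j, (a j) ^ 2) * (∑ i, (w i - wstar i) ^ 2)
          + (∑ j, (a j - astar j) ^ 2) * (∑ i, (wstar i) ^ 2)) := by
  have hpointwise : ∀ᵐ x ∂Z, ‖(patchNet σ P wstar astar x - patchNet σ P w a x) ^ 2‖
      ≤ 2 * k * B * ((∑ j, (a j) ^ 2) * (∑ i, (w i - wstar i) ^ 2)
          + (∑ j, (a j - astar j) ^ 2) * (∑ i, (wstar i) ^ 2)) := by
    filter_upwards [hB] with x hx
    rw [Real.norm_of_nonneg (sq_nonneg _)]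
    simpa only [Fintype.card_fin] using sq_patchNet_sub_le σ hσLip hσ0 P hP w wstar a astar hx
  refine (Real.le_norm_self _).trans ((norm_integral_le_of_norm_le_const hpointwise).trans_eq ?_)
  simp
end

section
/- Under the same symmetric, identity-covariance, disjoint-patch assumptions, with y = Σ_j a*_j σ((w*_{non})ᵀ P_j^{non} x), we have E_x[(2/(1+α)) y Σ_j a_j P_j^{non} x] = (aᵀ a*) w*_{non}. -/
open Finset MeasureTheory

/-! Since `σ t = (1 + α) / 2 * t + (1 - α) / 2 * |t|`, the label is `(1 + α) / 2` times its
linear part `Σ_j a*_j (w*)ᵀ P_j x` plus an even function of `x`. Multiplied by the odd factor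
`Σ_j a_j (P_j x)_p`, the even part integrates to zero because `Z` is symmetric. What remains is
a quadratic form in `x`, whose expectation under identity covariance is a sum over the
coordinates shared by both factors; disjointness of the patches leaves exactly the terms
`a_j a*_j w*_p`. -/

theorem Function.Odd.integral_eq_zero {G E : Type*} [MeasurableSpace G] [AddGroup G]
    [MeasurableNeg G] [NormedAddCommGroup E] [NormedSpace ℝ E] {μ : Measure G}
    [μ.IsNegInvariant] {f : G → E} (hf : f.Odd) : ∫ x, f x ∂μ = 0 := by
  have hneg := integral_neg_eq_self f μ
  simp only [hf.eq, integral_neg] at hneg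
  have htwo : (2 : ℝ) • ∫ x, f x ∂μ = 0 := by
    rw [two_smul]; nth_rw 1 [← hneg]; exact neg_add_cancel _
  exact (smul_eq_zero.mp htwo).resolve_left two_ne_zero

theorem integrable_coord_mul_coord {n : Type*} [DecidableEq n] {Z : Measure (n → ℝ)}
    (hcov : ∀ r s : n, ∫ x, x r * x s ∂Z = if r = s then 1 else 0) (r s : n) :
    Integrable (fun x => x r * x s) Z := by
  have hL2 : ∀ r : n, MemLp (fun x : n → ℝ => x r) 2 Z := fun r =>
    (memLp_two_iff_integrable_sq (measurable_pi_apply r).aestronglyMeasurable).2 <| by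
      simpa only [sq] using Integrable.of_integral_ne_zero (by simp [hcov])
  exact (hL2 r).integrable_mul (hL2 s)

theorem integral_sum_mul_sum_of_isotropic {n ι κ : Type*} [DecidableEq n] [Fintype ι]
    [Fintype κ] {Z : Measure (n → ℝ)} (hcov : ∀ r s : n, ∫ x, x r * x s ∂Z = if r = s then 1 else 0)
    (b : ι → ℝ) (f : ι → n) (c : κ → ℝ) (g : κ → n) :
    ∫ x, (∑ i, b i * x (f i)) * (∑ l, c l * x (g l)) ∂Z
      = ∑ i, ∑ l, if f i = g l then b i * c l else 0 := by
  have hterm : ∀ i l, (fun x : n → ℝ => b i * x (f i) * (c l * x (g l)))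
      = fun x => b i * c l * (x (f i) * x (g l)) := fun i l => funext fun x => by ring
  have hint : ∀ i l, Integrable (fun x : n → ℝ => b i * x (f i) * (c l * x (g l))) Z :=
    fun i l => hterm i l ▸ (integrable_coord_mul_coord hcov _ _).const_mul _
  simp_rw [sum_mul_sum]
  rw [integral_finsetSum _ fun i _ => integrable_finsetSum _ fun l _ => hint i l]
  refine sum_congr rfl fun i _ => ?_
  rw [integral_finsetSum _ fun l _ => hint i l]
  refine sum_congr rfl fun l _ => ?_
  rw [hterm, integral_const_mul, hcov, mul_ite, mul_one, mul_zero]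

theorem leakyRelu_sub_half_mul_even {α : ℝ} {σ : ℝ → ℝ}
    (hσ : ∀ t : ℝ, σ t = if 0 ≤ t then t else α * t) :
    Function.Even (fun t => σ t - (1 + α) / 2 * t) := by
  intro t
  rcases lt_trichotomy t 0 with h | rfl | h
  · simp only [hσ, neg_nonneg, h.le, h.not_ge, if_true, if_false]; ring
  · rw [neg_zero]
  · simp only [hσ, neg_nonneg, h.le, h.not_ge, if_true, if_false]; ring

theorem odd_label_mul_coord_sub_linear {n K M : Type*} [Fintype K] [Fintype M] {α : ℝ}
    {σ : ℝ → ℝ} (hσ : ∀ t : ℝ, σ t = if 0 ≤ t then t else α * t) (ind : K → M → n)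
    (a astar : K → ℝ) (wstar : M → ℝ) (p : M) :
    Function.Odd fun x : n → ℝ =>
      (∑ j, astar j * σ (∑ q, wstar q * x (ind j q))) * (∑ j, a j * x (ind j p))
        - (1 + α) / 2 *
          ((∑ j, astar j * ∑ q, wstar q * x (ind j q)) * (∑ j, a j * x (ind j p))) := by
  intro x
  have hpatch : ∀ j, ∑ q, wstar q * (-x) (ind j q) = -∑ q, wstar q * x (ind j q) := by
    simp [sum_neg_distrib]
  have hcoord : ∑ j, a j * (-x) (ind j p) = -∑ j, a j * x (ind j p) := by
    simp [sum_neg_distrib]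
  have hrelu : ∑ j, astar j * σ (-∑ q, wstar q * x (ind j q))
      = ∑ j, astar j * σ (∑ q, wstar q * x (ind j q))
        - (1 + α) * ∑ j, astar j * ∑ q, wstar q * x (ind j q) := by
    rw [mul_sum, ← sum_sub_distrib]
    refine sum_congr rfl fun j _ => ?_
    have heven : ∀ t, σ (-t) - (1 + α) / 2 * -t = σ t - (1 + α) / 2 * t :=
      leakyRelu_sub_half_mul_even hσ
    linear_combination astar j * heven (∑ q, wstar q * x (ind j q))
  simp only [hpatch, hcoord, hrelu, mul_neg, sum_neg_distrib]
  ring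

theorem integral_patch_mul_patch_coord {n K M : Type*} [DecidableEq n] [Fintype K] [Fintype M]
    {Z : Measure (n → ℝ)}
    (hcov : ∀ r s : n, ∫ x, x r * x s ∂Z = if r = s then 1 else 0) (ind : K → M → n)
    (hind : Function.Injective (fun jq : K × M => ind jq.1 jq.2))
    (a astar : K → ℝ) (wstar : M → ℝ) (p : M) :
    ∫ x, (∑ j, astar j * ∑ q, wstar q * x (ind j q)) * (∑ j, a j * x (ind j p)) ∂Z
      = (∑ j, a j * astar j) * wstar p := by
  classical
  have hflat : ∀ x : n → ℝ, ∑ j, astar j * ∑ q, wstar q * x (ind j q)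
      = ∑ jq : K × M, astar jq.1 * wstar jq.2 * x (ind jq.1 jq.2) := fun x => by
    simp_rw [mul_sum, ← mul_assoc]
    exact (Fintype.sum_prod_type' fun j q => astar j * wstar q * x (ind j q)).symm
  have hpatch : ∀ (jq : K × M) (j : K), ind jq.1 jq.2 = ind j p ↔ jq = (j, p) :=
    fun jq j => hind.eq_iff (b := (j, p))
  simp_rw [hflat, integral_sum_mul_sum_of_isotropic hcov, hpatch]
  rw [sum_comm, sum_mul]
  refine sum_congr rfl fun j _ => ?_
  rw [Fintype.sum_ite_eq']
  ring

theorem stage1_label_moment_general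
    {d m k : ℕ} (α : ℝ) (hα : 0 ≤ α) (σ : ℝ → ℝ)
    (hσ : ∀ t : ℝ, σ t = if 0 ≤ t then t else α * t)
    (ind : Fin k → Fin m → Fin d)
    (hind : Function.Injective (fun jp : Fin k × Fin m => ind jp.1 jp.2))
    (Z : Measure (Fin d → ℝ))
    (hsymm : Z.map (fun x => -x) = Z)
    (hcov : ∀ p q : Fin d, ∫ x, x p * x q ∂Z = if p = q then 1 else 0)
    (a astar : Fin k → ℝ) (wstar : Fin m → ℝ)
    (hInt : ∀ p : Fin m, Integrable (fun x =>
      (∑ j, astar j * σ (∑ q, wstar q * x (ind j q))) * (∑ j, a j * x (ind j p))) Z)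
    (hIntLin : ∀ p : Fin m, Integrable (fun x =>
      (∑ j, astar j * ∑ q, wstar q * x (ind j q)) * (∑ j, a j * x (ind j p))) Z) :
    ∀ p : Fin m,
      ∫ x, (2 / (1 + α)) * (∑ j, astar j * σ (∑ q, wstar q * x (ind j q)))
            * (∑ j, a j * x (ind j p)) ∂Z
        = (∑ j, a j * astar j) * wstar p := by
  intro p
  have : Z.IsNegInvariant := ⟨hsymm⟩
  have hlabel := integral_sub (hInt p) ((hIntLin p).const_mul ((1 + α) / 2))
  rw [(odd_label_mul_coord_sub_linear hσ ind a astar wstar p).integral_eq_zero,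
    integral_const_mul, integral_patch_mul_patch_coord hcov ind hind, eq_comm, sub_eq_zero]
    at hlabel
  have hα' : 1 + α ≠ 0 := by linarith
  simp_rw [mul_assoc]
  rw [integral_const_mul, hlabel]
  field_simp

/-- Under the same symmetric, identity-covariance, disjoint-patch assumptions, with
label `y = Σ_j a*_j σ((w*_non)ᵀ P_j^non x)`, we have
`E[(2/(1+α)) y Σ_j a_j P_j^non x] = (aᵀ a*) w*_non` (coordinatewise). -/
theorem stage1_label_moment
    {d m k : ℕ} (α : ℝ) (hα : 0 ≤ α) (hα1 : α < 1) (σ : ℝ → ℝ)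
    (hσ : ∀ t : ℝ, σ t = if 0 ≤ t then t else α * t)
    (ind : Fin k → Fin m → Fin d)
    (hind : Function.Injective (fun jp : Fin k × Fin m => ind jp.1 jp.2))
    (Z : Measure (Fin d → ℝ)) [IsProbabilityMeasure Z]
    (hsymm : Z.map (fun x => -x) = Z)
    (hcov : ∀ p q : Fin d, ∫ x, x p * x q ∂Z = if p = q then 1 else 0)
    (a astar : Fin k → ℝ) (wstar : Fin m → ℝ)
    (hInt : ∀ p : Fin m, Integrable (fun x =>
      (∑ j, astar j * σ (∑ q, wstar q * x (ind j q))) * (∑ j, a j * x (ind j p))) Z)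
    (hIntLin : ∀ p : Fin m, Integrable (fun x =>
      (∑ j, astar j * ∑ q, wstar q * x (ind j q)) * (∑ j, a j * x (ind j p))) Z) :
    ∀ p : Fin m,
      ∫ x, (2 / (1 + α)) * (∑ j, astar j * σ (∑ q, wstar q * x (ind j q)))
            * (∑ j, a j * x (ind j p)) ∂Z
        = (∑ j, a j * astar j) * wstar p :=
  stage1_label_moment_general α hα σ hσ ind hind Z hsymm hcov a astar wstar hInt hIntLin
end
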